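/- Let h ∈ ℝ and let γ_1, …, γ_{n+1} be real numbers satisfying the interlacing condition 0 > γ_1 > −θ_1 > γ_2 > −θ_2 > ⋯ > −θ_n > γ_{n+1}. Then the (n+1)×(n+1) real matrix A^{h} whose first row is (e^{γ_1 h}, …, e^{γ_{n+1} h}) and whose (l+1)-th row, for l = 1, …, n, is (e^{γ_1 h}/(θ_l + γ_1), …, e^{γ_{n+1} h}/(θ_l + γ_{n+1})), is nonsingular. -/

import Mathlib

/-!
Write `w j = e^{γ_j h} v_j` for a kernel vector `v`. The rows of the matrix say that
`∑ w_j = 0` and that the rational function `∑_j w_j / (t + γ_j)` vanishes at the `n` distinct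
points `t = θ_l`. Over the common denominator its numerator has degree `≤ n`, and its `t^n`
coefficient is `∑ w_j = 0`, so it has degree `< n` and `n` roots, hence is zero. Evaluating the
numerator at `t = -γ_j` isolates `w_j`, which therefore vanishes because the `γ_j` are distinct;
the interlacing makes them distinct and keeps every `θ_l + γ_j` away from zero.
-/

open Real Polynomial Finset Lagrange

namespace PartialFraction

variable {K ι κ : Type*} [Field K] [Fintype ι] [DecidableEq ι]

/-- The numerator of `∑ j, v j / (X - a j)` over the common denominator `∏ j, (X - a j)`. -/
noncomputable def numerator (a v : ι → K) : K[X] :=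
  ∑ j, C (v j) * nodal (univ.erase j) a

theorem eval_numerator (a v : ι → K) (t : K) :
    (numerator a v).eval t = ∑ j, v j * ∏ k ∈ univ.erase j, (t - a k) := by
  simp [numerator, eval_finsetSum, eval_nodal]

theorem eval_numerator_eq_sum_div_mul {a : ι → K} (v : ι → K) {t : K} (ht : ∀ j, t ≠ a j) :
    (numerator a v).eval t = (∑ j, v j / (t - a j)) * ∏ k, (t - a k) := by
  rw [eval_numerator, sum_mul]
  refine sum_congr rfl fun j _ => ?_
  rw [← mul_prod_erase _ _ (mem_univ j)]
  field_simp [sub_ne_zero.mpr (ht j)]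

theorem eval_numerator_at_node (a v : ι → K) (j : ι) :
    (numerator a v).eval (a j) = v j * ∏ k ∈ univ.erase j, (a j - a k) := by
  rw [eval_numerator, sum_eq_single j]
  intro i _ hij
  rw [prod_eq_zero (mem_erase.mpr ⟨Ne.symm hij, mem_univ j⟩) (sub_self _), mul_zero]
  simp

theorem degree_numerator_lt {v : ι → K} (a : ι → K) (hv : ∑ j, v j = 0) :
    (numerator a v).degree < (Fintype.card ι - 1 : ℕ) := by
  have hdeg (j : ι) : (nodal (univ.erase j) a).natDegree = Fintype.card ι - 1 := by
    rw [natDegree_nodal, card_erase_of_mem (mem_univ j), card_univ]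
  rw [degree_lt_iff_coeff_zero]
  intro m hm
  rw [numerator, finsetSum_coeff]
  simp_rw [coeff_C_mul]
  rcases hm.eq_or_lt with rfl | hlt
  · have hlead (j : ι) : (nodal (univ.erase j) a).coeff (Fintype.card ι - 1) = 1 :=
      hdeg j ▸ nodal_monic.coeff_natDegree
    simp_rw [hlead, mul_one, hv]
  · exact sum_eq_zero fun j _ => by rw [coeff_eq_zero_of_natDegree_lt (hdeg j ▸ hlt), mul_zero]

theorem eq_zero_of_sum_div_sub_eq_zero [Fintype κ] {a : ι → K} {y : κ → K}
    (ha : Function.Injective a) (hy : Function.Injective y)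
    (hcard : Fintype.card ι ≤ Fintype.card κ + 1) (hya : ∀ l j, y l ≠ a j)
    {v : ι → K} (hv : ∑ j, v j = 0) (hvy : ∀ l, ∑ j, v j / (y l - a j) = 0) : v = 0 := by
  have hnum : numerator a v = 0 := by
    refine eq_zero_of_degree_lt_of_eval_index_eq_zero univ hy.injOn ?_ fun l _ => ?_
    · refine (degree_numerator_lt a hv).trans_le ?_
      rw [card_univ]
      exact_mod_cast Nat.sub_le_of_le_add hcard
    · rw [eval_numerator_eq_sum_div_mul v (hya l), hvy l, zero_mul]
  funext j
  have hprod : ∏ k ∈ univ.erase j, (a j - a k) ≠ 0 :=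
    prod_ne_zero_iff.mpr fun k hk => sub_ne_zero.mpr (ha.ne (mem_erase.mp hk).1.symm)
  have hnode := eval_numerator_at_node a v j
  rw [hnum, eval_zero] at hnode
  exact (mul_eq_zero.mp hnode.symm).resolve_right hprod

end PartialFraction

theorem strictAnti_of_interlacing {α : Type*} [Preorder α] [Neg α] {n : ℕ} {θ : Fin n → α}
    {γ : Fin (n + 1) → α} (hinter : ∀ k : Fin n, -θ k < γ k.castSucc ∧ γ k.succ < -θ k) :
    StrictAnti γ :=
  Fin.strictAnti_iff_succ_lt.mpr fun k => (hinter k).2.trans (hinter k).1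

theorem ne_neg_of_interlacing {K : Type*} [Field K] [LinearOrder K] [IsStrictOrderedRing K]
    {n : ℕ} {θ : Fin n → K} {γ : Fin (n + 1) → K}
    (hinter : ∀ k : Fin n, -θ k < γ k.castSucc ∧ γ k.succ < -θ k)
    (l : Fin n) (j : Fin (n + 1)) : θ l ≠ -γ j := by
  have hanti := (strictAnti_of_interlacing hinter).antitone
  rcases le_or_gt (j : ℕ) l with hle | hlt
  · have := hanti (show j ≤ l.castSucc from hle)
    linarith [(hinter l).1]
  · have := hanti (show l.succ ≤ j from Nat.succ_le_of_lt hlt)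
    linarith [(hinter l).2]

/-- If `0 > γ₁ > −θ₁ > γ₂ > −θ₂ > ⋯ > −θ_n > γ_{n+1}`, then the
`(n+1)×(n+1)` matrix whose first row is `(e^{γ_j h})_j` and whose `(l+1)`-th
row is `(e^{γ_j h}/(θ_l + γ_j))_j` is nonsingular. -/
theorem one_sided_exit_matrix_nonsingular_down
    (n : ℕ)
    (θ : Fin n → ℝ) (hθmono : StrictMono θ)
    (h : ℝ) (γ : Fin (n + 1) → ℝ)
    (hinter : ∀ k : Fin n, -θ k < γ k.castSucc ∧ γ k.succ < -θ k) :
    (Matrix.of fun i j : Fin (n + 1) =>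
      if _ : (i : ℕ) = 0 then Real.exp (γ j * h)
      else Real.exp (γ j * h) / (θ ⟨(i : ℕ) - 1, by have := i.isLt; omega⟩ + γ j)).det
      ≠ 0 := by
  intro hdet
  obtain ⟨v, hv0, hMv⟩ := Matrix.exists_mulVec_eq_zero_iff.mpr hdet
  have hw : (fun j => exp (γ j * h) * v j) = 0 := by
    refine PartialFraction.eq_zero_of_sum_div_sub_eq_zero (a := fun j => -γ j)
      (neg_injective.comp (strictAnti_of_interlacing hinter).injective) hθmono.injective
      (by simp) (ne_neg_of_interlacing hinter) ?_ fun l => ?_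
    · simpa [Matrix.mulVec, dotProduct, mul_comm] using congrFun hMv 0
    · simpa [Matrix.mulVec, dotProduct, div_mul_eq_mul_div] using congrFun hMv l.succ
  exact hv0 (funext fun j => by simpa [exp_ne_zero] using congrFun hw j)
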